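/- arXiv:2009.11548 — 4 statements merged into one kernel-verified Lean document; each statement's English description precedes it below -/
import Mathlib

section
/- For every real λ > 1, the function value λ·(1 - exp(-(ln λ)/(λ-1))) is at least 1 - e⁻¹; equivalently, 1 - exp(-(ln λ)/(λ-1)) ≥ (1 - e⁻¹)/λ. -/
/-!
Put `t = log λ / (λ - 1)`, so that the claim is `1 - e⁻¹ ≤ λ (1 - e^{-t})`. From
`1 - 1/λ ≤ log λ ≤ λ - 1` we get `t ∈ (0, 1]` and `λ t ≥ 1`. On `[0, 1]` the concave function
`1 - e^{-t}` lies above its chord `t (1 - e⁻¹)`, hence `λ (1 - e^{-t}) ≥ λ t (1 - e⁻¹) ≥ 1 - e⁻¹`.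
-/

open Real

lemma mul_one_sub_exp_neg_one_le_one_sub_exp_neg {t : ℝ} (ht₀ : 0 ≤ t) (ht₁ : t ≤ 1) :
    t * (1 - exp (-1)) ≤ 1 - exp (-t) := by
  have hchord : exp ((1 - t) • (0 : ℝ) + t • (-1 : ℝ)) ≤ (1 - t) • exp 0 + t • exp (-1) :=
    convexOn_exp.2 (Set.mem_univ _) (Set.mem_univ _) (by linarith) ht₀ (by ring)
  simp only [smul_eq_mul, mul_zero, zero_add, mul_neg, mul_one, exp_zero] at hchord
  linarith

lemma log_div_sub_one_pos {l : ℝ} (hl : 1 < l) : 0 < log l / (l - 1) :=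
  div_pos (log_pos hl) (sub_pos.2 hl)

lemma log_div_sub_one_le_one {l : ℝ} (hl : 1 < l) : log l / (l - 1) ≤ 1 :=
  (div_le_one (sub_pos.2 hl)).2 (log_le_sub_one_of_pos (by linarith))

lemma one_le_mul_log_div_sub_one {l : ℝ} (hl : 1 < l) : 1 ≤ l * (log l / (l - 1)) := by
  have hl₀ : 0 < l := by linarith
  have hlog : 1 - l⁻¹ ≤ log l := one_sub_inv_le_log_of_pos hl₀
  rw [mul_div_assoc', le_div_iff₀ (sub_pos.2 hl)]
  have : l * (1 - l⁻¹) = l - 1 := by field_simp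
  nlinarith

theorem stmt_3 (l : ℝ) (h : 1 < l) :
    1 - Real.exp (-1) ≤ l * (1 - Real.exp (-(Real.log l) / (l - 1))) ∧
    (1 - Real.exp (-1)) / l ≤ 1 - Real.exp (-(Real.log l) / (l - 1)) := by
  set t := log l / (l - 1)
  have hneg : -log l / (l - 1) = -t := neg_div _ _
  have hchord := mul_one_sub_exp_neg_one_le_one_sub_exp_neg (log_div_sub_one_pos h).le
    (log_div_sub_one_le_one h)
  have hmain : 1 - exp (-1) ≤ l * (1 - exp (-t)) :=
    calc 1 - exp (-1) ≤ l * t * (1 - exp (-1)) :=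
          le_mul_of_one_le_left (by simp [exp_le_one_iff]) (one_le_mul_log_div_sub_one h)
      _ = l * (t * (1 - exp (-1))) := mul_assoc _ _ _
      _ ≤ l * (1 - exp (-t)) := mul_le_mul_of_nonneg_left hchord (by linarith)
  rw [hneg, div_le_iff₀ (by linarith)]
  exact ⟨hmain, hmain.trans_eq (mul_comm _ _)⟩
end

section
/- Let A and B be n×n Hermitian matrices over ℂ, with eigenvalues listed in decreasing order σ₁ ≥ ... ≥ σₙ. Then for every i, |σᵢ(A+B) − σᵢ(A)| ≤ ‖B‖_F, where ‖·‖_F is the Frobenius norm. -/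
/-!
Courant–Fischer argument. For `i : Fin n`, the eigenvectors of `A + B` belonging to its `i + 1`
largest eigenvalues and those of `A` belonging to its `n - i` smallest ones span subspaces whose
dimensions add up to `n + 1`, so they share a vector `x ≠ 0`. On it
`σᵢ(A+B) ‖x‖² ≤ re ⟪x, (A+B) x⟫ = re ⟪x, A x⟫ + re ⟪x, B x⟫ ≤ (σᵢ(A) + ‖B‖_F) ‖x‖²`,
where `‖B x‖ ≤ ‖B‖_F ‖x‖` is submultiplicativity of the Frobenius norm. Exchanging the roles of
`A` and `A + B` gives the other inequality.
-/

open Finset Module RCLike Submodule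

theorem Submodule.inf_ne_bot_of_finrank_lt_add {K V : Type*} [DivisionRing K] [AddCommGroup V]
    [Module K V] [FiniteDimensional K V] {U W : Submodule K V}
    (h : finrank K V < finrank K U + finrank K W) : U ⊓ W ≠ ⊥ := by
  intro hUW
  have := finrank_sup_add_finrank_inf_eq U W
  rw [hUW, finrank_bot] at this
  have := (U ⊔ W).finrank_le
  omega

section InnerProductSpace

variable {𝕜 E : Type*} [RCLike 𝕜] [NormedAddCommGroup E] [InnerProductSpace 𝕜 E]

section Eigenvectors

variable {ι : Type*} [Fintype ι] {v : ι → E} {T : E →ₗ[𝕜] E} {μ : ι → ℝ} {x : E}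

theorem Orthonormal.exists_re_inner_apply_eq_sum (hv : Orthonormal 𝕜 v)
    (hT : ∀ j, T (v j) = (μ j : 𝕜) • v j) (hx : x ∈ span 𝕜 (Set.range v)) :
    ∃ a : ι → 𝕜, ‖x‖ ^ 2 = ∑ j, ‖a j‖ ^ 2 ∧ re (inner 𝕜 x (T x)) = ∑ j, μ j * ‖a j‖ ^ 2 := by
  obtain ⟨a, rfl⟩ := (mem_span_range_iff_exists_fun 𝕜).mp hx
  have hTx : T (∑ j, a j • v j) = ∑ j, (μ j * a j) • v j := by
    simp only [map_sum, map_smul, hT, smul_smul, mul_comm]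
  refine ⟨a, ?_, ?_⟩
  · rw [← inner_self_eq_norm_sq (𝕜 := 𝕜), hv.inner_sum, map_sum]
    refine sum_congr rfl fun j _ => ?_
    rw [RCLike.conj_mul, ← ofReal_pow, ofReal_re]
  · rw [hTx, hv.inner_sum, map_sum]
    refine sum_congr rfl fun j _ => ?_
    rw [mul_left_comm, RCLike.conj_mul, ← ofReal_pow, ← ofReal_mul, ofReal_re]

theorem Orthonormal.re_inner_apply_le_of_mem_span (hv : Orthonormal 𝕜 v)
    (hT : ∀ j, T (v j) = (μ j : 𝕜) • v j) {c : ℝ} (hμ : ∀ j, μ j ≤ c)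
    (hx : x ∈ span 𝕜 (Set.range v)) : re (inner 𝕜 x (T x)) ≤ c * ‖x‖ ^ 2 := by
  obtain ⟨a, hnorm, hre⟩ := hv.exists_re_inner_apply_eq_sum hT hx
  rw [hnorm, hre, mul_sum]
  gcongr with j
  exact hμ j

theorem Orthonormal.le_re_inner_apply_of_mem_span (hv : Orthonormal 𝕜 v)
    (hT : ∀ j, T (v j) = (μ j : 𝕜) • v j) {c : ℝ} (hμ : ∀ j, c ≤ μ j)
    (hx : x ∈ span 𝕜 (Set.range v)) : c * ‖x‖ ^ 2 ≤ re (inner 𝕜 x (T x)) := by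
  obtain ⟨a, hnorm, hre⟩ := hv.exists_re_inner_apply_eq_sum hT hx
  rw [hnorm, hre, mul_sum]
  gcongr with j
  exact hμ j

end Eigenvectors

theorem Orthonormal.finrank_span_restrict {ι : Type*} {v : ι → E} (hv : Orthonormal 𝕜 v)
    (s : Finset ι) : finrank 𝕜 (span 𝕜 (Set.range fun k : s => v k)) = #s :=
  (finrank_span_eq_card (hv.comp _ Subtype.val_injective).linearIndependent).trans
    (Fintype.card_coe s)

theorem eigenvalue_le_add_of_re_inner_sub_apply_le [FiniteDimensional 𝕜 E] {n : ℕ}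
    (hn : finrank 𝕜 E = n) {S T : E →ₗ[𝕜] E} {v w : Fin n → E} {μ ν : Fin n → ℝ}
    (hv : Orthonormal 𝕜 v) (hw : Orthonormal 𝕜 w)
    (hSv : ∀ j, S (v j) = (μ j : 𝕜) • v j) (hTw : ∀ j, T (w j) = (ν j : 𝕜) • w j)
    (hμ : Antitone μ) (hν : Antitone ν) {c : ℝ}
    (hc : ∀ x, re (inner 𝕜 x ((S - T) x)) ≤ c * ‖x‖ ^ 2) (i : Fin n) :
    μ i ≤ ν i + c := by
  set U := span 𝕜 (Set.range fun k : Iic i => v k)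
  set W := span 𝕜 (Set.range fun k : Ici i => w k)
  have hUW : U ⊓ W ≠ ⊥ := by
    refine inf_ne_bot_of_finrank_lt_add ?_
    rw [hv.finrank_span_restrict, hw.finrank_span_restrict, Fin.card_Iic, Fin.card_Ici, hn]
    omega
  obtain ⟨x, ⟨hxU, hxW⟩, hx⟩ := exists_mem_ne_zero_of_ne_bot hUW
  have hlower : μ i * ‖x‖ ^ 2 ≤ re (inner 𝕜 x (S x)) :=
    (hv.comp _ Subtype.val_injective).le_re_inner_apply_of_mem_span (fun k => hSv k)
      (fun k => hμ (mem_Iic.mp k.2)) hxU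
  have hupper : re (inner 𝕜 x (T x)) ≤ ν i * ‖x‖ ^ 2 :=
    (hw.comp _ Subtype.val_injective).re_inner_apply_le_of_mem_span (fun k => hTw k)
      (fun k => hν (mem_Ici.mp k.2)) hxW
  have hsplit : re (inner 𝕜 x (S x)) = re (inner 𝕜 x (T x)) + re (inner 𝕜 x ((S - T) x)) := by
    rw [LinearMap.sub_apply, inner_sub_right, map_sub]
    ring
  have : μ i * ‖x‖ ^ 2 ≤ (ν i + c) * ‖x‖ ^ 2 := by linarith [hc x]
  exact le_of_mul_le_mul_right this (by positivity)

end InnerProductSpace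

namespace Matrix

variable {𝕜 : Type*} [RCLike 𝕜]

attribute [local instance] frobeniusNormedAddCommGroup in
theorem norm_toLpLin_two_le {m n : Type*} [Fintype m] [Fintype n] [DecidableEq n]
    (B : Matrix m n 𝕜) (x : EuclideanSpace 𝕜 n) :
    ‖toLpLin 2 2 B x‖ ≤ √(∑ i, ∑ j, ‖B i j‖ ^ 2) * ‖x‖ := by
  have hB : ‖B‖ = √(∑ i, ∑ j, ‖B i j‖ ^ 2) := by
    rw [frobenius_norm_def, Real.sqrt_eq_rpow]
    norm_cast
  calc ‖toLpLin 2 2 B x‖ = ‖B * replicateCol (Fin 1) x.ofLp‖ := by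
        rw [toLpLin_apply, ← replicateCol_mulVec]
        exact (frobenius_norm_replicateCol _).symm
    _ ≤ ‖B‖ * ‖replicateCol (Fin 1) x.ofLp‖ := frobenius_norm_mul _ _
    _ = √(∑ i, ∑ j, ‖B i j‖ ^ 2) * ‖x‖ := by
        rw [hB]
        exact congrArg _ (frobenius_norm_replicateCol _)

theorem re_inner_toLpLin_two_le {n : Type*} [Fintype n] [DecidableEq n]
    (B : Matrix n n 𝕜) (x : EuclideanSpace 𝕜 n) :
    re (inner 𝕜 x (toLpLin 2 2 B x)) ≤ √(∑ i, ∑ j, ‖B i j‖ ^ 2) * ‖x‖ ^ 2 :=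
  calc re (inner 𝕜 x (toLpLin 2 2 B x)) ≤ ‖x‖ * ‖toLpLin 2 2 B x‖ :=
        (re_le_norm _).trans (norm_inner_le_norm _ _)
    _ ≤ ‖x‖ * (√(∑ i, ∑ j, ‖B i j‖ ^ 2) * ‖x‖) := by gcongr; exact norm_toLpLin_two_le B x
    _ = √(∑ i, ∑ j, ‖B i j‖ ^ 2) * ‖x‖ ^ 2 := by ring

theorem IsHermitian.toLpLin_eigenvectorBasis {n : Type*} [Fintype n] [DecidableEq n]
    {M : Matrix n n 𝕜} (hM : M.IsHermitian) (j : n) :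
    toLpLin 2 2 M (hM.eigenvectorBasis j) = (hM.eigenvalues j : 𝕜) • hM.eigenvectorBasis j := by
  rw [toLpLin_apply, hM.mulVec_eigenvectorBasis, real_smul_eq_coe_smul (K := 𝕜)]
  rfl

theorem IsHermitian.eigenvalues_le_add {n : ℕ} {M N : Matrix (Fin n) (Fin n) 𝕜}
    (hM : M.IsHermitian) (hN : N.IsHermitian) {gM gN : Equiv.Perm (Fin n)}
    (hmM : Antitone (hM.eigenvalues ∘ gM)) (hmN : Antitone (hN.eigenvalues ∘ gN)) (i : Fin n) :
    hM.eigenvalues (gM i) ≤ hN.eigenvalues (gN i) + √(∑ a, ∑ b, ‖(M - N) a b‖ ^ 2) :=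
  eigenvalue_le_add_of_re_inner_sub_apply_le finrank_euclideanSpace_fin
    (hM.eigenvectorBasis.orthonormal.comp gM gM.injective)
    (hN.eigenvectorBasis.orthonormal.comp gN gN.injective)
    (fun j => hM.toLpLin_eigenvectorBasis (gM j)) (fun j => hN.toLpLin_eigenvectorBasis (gN j))
    hmM hmN (fun x => by simpa only [map_sub] using re_inner_toLpLin_two_le (M - N) x) i

end Matrix

theorem stmt_9_general {n : ℕ} (A B : Matrix (Fin n) (Fin n) ℂ)
    (hA : A.IsHermitian) (hAB : (A + B).IsHermitian)
    (σA σAB : Fin n → ℝ) (gA gAB : Equiv.Perm (Fin n))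
    (hσA : σA = hA.eigenvalues ∘ gA) (hσAB : σAB = hAB.eigenvalues ∘ gAB)
    (hmonoA : Antitone σA) (hmonoAB : Antitone σAB) :
    ∀ i, |σAB i - σA i| ≤ Real.sqrt (∑ i, ∑ j, ‖B i j‖ ^ 2) := by
  intro i
  subst hσA hσAB
  have hup := hAB.eigenvalues_le_add hA hmonoAB hmonoA i
  have hdown := hA.eigenvalues_le_add hAB hmonoA hmonoAB i
  rw [add_sub_cancel_left] at hup
  simp only [sub_add_cancel_left, Matrix.neg_apply, norm_neg] at hdown
  rw [abs_sub_le_iff, Function.comp_apply, Function.comp_apply]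
  constructor <;> linarith

theorem stmt_9 {n : ℕ} (A B : Matrix (Fin n) (Fin n) ℂ)
    (hA : A.IsHermitian) (hB : B.IsHermitian) (hAB : (A + B).IsHermitian)
    (σA σAB : Fin n → ℝ) (gA gAB : Equiv.Perm (Fin n))
    (hσA : σA = hA.eigenvalues ∘ gA) (hσAB : σAB = hAB.eigenvalues ∘ gAB)
    (hmonoA : Antitone σA) (hmonoAB : Antitone σAB) :
    ∀ i, |σAB i - σA i| ≤ Real.sqrt (∑ i, ∑ j, ‖B i j‖ ^ 2) :=
  stmt_9_general A B hA hAB σA σAB gA gAB hσA hσAB hmonoA hmonoAB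
end

section
/- Let X be a T×M complex matrix (T ≥ M) and X' another T×M matrix with XᴴX = X'ᴴX' = (PT/M)·I_M. Then tr(Xᴴ(I_T + X'X'ᴴ)⁻¹X) = PT·(1 − α⁻¹·‖X'ᴴX‖_F²/(PT)²), where α = 1/(PT) + 1/M. -/
open scoped Matrix

theorem stmt_11 {T M : ℕ} (hT : 0 < T) (hM : 0 < M) (P : ℝ) (hP : 0 < P)
    (X X' : Matrix (Fin T) (Fin M) ℂ)
    (hX : Xᴴ * X = ((P * T / M : ℝ) : ℂ) • 1)
    (hX' : X'ᴴ * X' = ((P * T / M : ℝ) : ℂ) • 1) :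
    (Xᴴ * (1 + X' * X'ᴴ)⁻¹ * X).trace =
      (((P * T) * (1 - (1 / (P * T) + 1 / M)⁻¹ *
        (∑ i, ∑ j, ‖(X'ᴴ * X) i j‖ ^ 2) / (P * T) ^ 2) : ℝ) : ℂ) := by
  set r : ℝ := P * T / M with hr
  have hrpos : 0 < r := by
    apply div_pos (by positivity) (by exact_mod_cast hM)
  have hr1 : (1 : ℝ) + r ≠ 0 := by positivity
  have hr1C : (1 : ℂ) + (r : ℂ) ≠ 0 := by
    exact_mod_cast (Complex.ofReal_ne_zero.mpr hr1)
  set c : ℂ := ((1 : ℂ) + (r : ℂ))⁻¹ with hc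
  -- square of X'X'ᴴ
  have hsq : X' * X'ᴴ * (X' * X'ᴴ) = (r : ℂ) • (X' * X'ᴴ) := by
    calc X' * X'ᴴ * (X' * X'ᴴ) = X' * (X'ᴴ * X') * X'ᴴ := by
          simp only [Matrix.mul_assoc]
      _ = (r : ℂ) • (X' * X'ᴴ) := by
          rw [hX']; simp [Matrix.mul_smul, Matrix.smul_mul, Matrix.mul_assoc]
  have hinv : (1 + X' * X'ᴴ)⁻¹ = 1 - c • (X' * X'ᴴ) := by
    apply Matrix.inv_eq_right_inv
    have : (1 + X' * X'ᴴ) * (1 - c • (X' * X'ᴴ))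
        = 1 + (1 - c - c * r) • (X' * X'ᴴ) := by
      simp only [Matrix.mul_sub, Matrix.sub_mul, Matrix.add_mul, Matrix.mul_one,
        Matrix.one_mul, Matrix.mul_smul, hsq, smul_smul, sub_smul, one_smul, mul_comm]
      module
    rw [this]
    have : (1 : ℂ) - c - c * r = 0 := by
      rw [hc]; field_simp; ring
    rw [this, zero_smul, add_zero]
  rw [hinv]
  have hexp : Xᴴ * (1 - c • (X' * X'ᴴ)) * X
      = (r : ℂ) • (1 : Matrix (Fin M) (Fin M) ℂ) - c • ((X'ᴴ * X)ᴴ * (X'ᴴ * X)) := by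
    simp only [Matrix.mul_sub, Matrix.sub_mul, Matrix.mul_one, Matrix.one_mul,
      Matrix.mul_smul, Matrix.smul_mul, hX, Matrix.conjTranspose_mul,
      Matrix.conjTranspose_conjTranspose]
    simp [Matrix.mul_assoc]
  rw [hexp]
  have htr : ((X'ᴴ * X)ᴴ * (X'ᴴ * X)).trace
      = ((∑ i, ∑ j, ‖(X'ᴴ * X) i j‖ ^ 2 : ℝ) : ℂ) := by
    simp only [Matrix.trace, Matrix.diag, Matrix.mul_apply, Matrix.conjTranspose_apply]
    push_cast
    rw [Finset.sum_comm]
    congr 1; ext i; congr 1; ext j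
    rw [Complex.star_def, ← Complex.normSq_eq_conj_mul_self,
      Complex.normSq_eq_norm_sq]
    norm_cast
  rw [Matrix.trace_sub, Matrix.trace_smul, Matrix.trace_smul, Matrix.trace_one, htr]
  set S : ℝ := ∑ i, ∑ j, ‖(X'ᴴ * X) i j‖ ^ 2
  have hMne : (M : ℝ) ≠ 0 := by exact_mod_cast hM.ne'
  have hPTne : (P * T : ℝ) ≠ 0 := by
    have : (0:ℝ) < P * T := by positivity
    exact this.ne'
  have key : r * M - (1 + r)⁻¹ * S
      = P * T * (1 - (1 / (P * T) + 1 / M)⁻¹ * S / (P * T) ^ 2) := by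
    rw [hr]
    field_simp
  calc (r : ℂ) • (Fintype.card (Fin M) : ℂ) - c • ((S : ℝ) : ℂ)
      = ((r * M - (1 + r)⁻¹ * S : ℝ) : ℂ) := by
        push_cast [hc]
        simp [smul_eq_mul]
    _ = _ := by rw [key]
end

section
/- The function θ ↦ ρ·aᴴ(I_T + ρ·bbᴴ + ρθ·ccᴴ)⁻¹a is monotonically nonincreasing on θ ≥ 0, and the function θ ↦ ρθ·aᴴ(I_T + ρ·bbᴴ + ρθ·ccᴴ)⁻¹a is strictly increasing on θ ≥ 0, whenever a, b, c ∈ ℂ^T are distinct unit vectors and ρ > 0. -/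
/-!
Write `A = I + ρ b bᴴ`, `B = A⁻¹` and `s = ρθ`. By Sherman–Morrison,
`aᴴ (A + s c cᴴ)⁻¹ a = x - s |y|² / (1 + s z)` with `x = aᴴ B a > 0`, `y = aᴴ B c`,
`z = cᴴ B c ≥ 0`, which is nonincreasing in `s`. Multiplied by `s` it becomes
`(s x + s² (x z - |y|²)) / (1 + s z)`, strictly increasing because `|y|² ≤ x z` is the
Cauchy–Schwarz inequality for the inner product `⟪u, v⟫ = uᴴ B v`.
-/

open scoped Matrix ComplexOrder
open Matrix Set

lemma antitoneOn_sub_mul_div {x w z : ℝ} (hw : 0 ≤ w) (hz : 0 ≤ z) :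
    AntitoneOn (fun s => x - s * w / (1 + s * z)) (Ici 0) := by
  intro s₁ hs₁ s₂ hs₂ h
  simp only [mem_Ici] at hs₁ hs₂
  dsimp only
  have hd₁ : 0 < 1 + s₁ * z := by positivity
  have hd₂ : 0 < 1 + s₂ * z := by positivity
  rw [sub_le_sub_iff_left, div_le_div_iff₀ hd₁ hd₂]
  nlinarith [mul_nonneg hw (sub_nonneg.2 h)]

lemma strictMonoOn_mul_sub_mul_div {x w z : ℝ} (hx : 0 < x) (hz : 0 ≤ z) (hwxz : w ≤ x * z) :
    StrictMonoOn (fun s => s * (x - s * w / (1 + s * z))) (Ici 0) := by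
  intro s₁ hs₁ s₂ hs₂ h
  simp only [mem_Ici] at hs₁ hs₂
  dsimp only
  have hd₁ : 0 < 1 + s₁ * z := by positivity
  have hd₂ : 0 < 1 + s₂ * z := by positivity
  have hform : ∀ s, 0 < 1 + s * z →
      s * (x - s * w / (1 + s * z)) = (s * x + s ^ 2 * (x * z - w)) / (1 + s * z) := by
    intro s hs
    field_simp
    ring
  rw [hform s₁ hd₁, hform s₂ hd₂, div_lt_div_iff₀ hd₁ hd₂]
  have hd : 0 ≤ x * z - w := sub_nonneg.2 hwxz
  have hgap : 0 < s₂ - s₁ := sub_pos.2 h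
  nlinarith [mul_pos hx hgap, mul_nonneg (mul_nonneg hd hgap.le) (add_nonneg hs₁ hs₂),
    mul_nonneg (mul_nonneg (mul_nonneg hd hz) (mul_nonneg hs₁ hs₂)) hgap.le]

namespace Matrix

variable {n 𝕜 : Type*} [Fintype n] [RCLike 𝕜]

lemma IsHermitian.star_dotProduct_mulVec {B : Matrix n n 𝕜} (hB : B.IsHermitian) (x y : n → 𝕜) :
    star (star x ⬝ᵥ (B *ᵥ y)) = star y ⬝ᵥ (B *ᵥ x) := by
  rw [star_dotProduct, star_star, star_mulVec, hB.eq, dotProduct_mulVec]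

lemma IsHermitian.ofReal_re_star_dotProduct_mulVec_self {B : Matrix n n 𝕜} (hB : B.IsHermitian)
    (x : n → 𝕜) : (RCLike.re (star x ⬝ᵥ (B *ᵥ x)) : 𝕜) = star x ⬝ᵥ (B *ᵥ x) :=
  RCLike.conj_eq_iff_re.mp (hB.star_dotProduct_mulVec x x)

abbrev PosSemidef.preInnerProductCore {B : Matrix n n 𝕜} (hB : B.PosSemidef) :
    PreInnerProductSpace.Core 𝕜 (n → 𝕜) where
  inner x y := star x ⬝ᵥ (B *ᵥ y)
  conj_inner_symm x y := hB.isHermitian.star_dotProduct_mulVec y x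
  re_inner_nonneg x := (RCLike.nonneg_iff.mp (hB.dotProduct_mulVec_nonneg x)).1
  add_left x y z := by simp only [star_add, add_dotProduct]
  smul_left x y r := by simp only [star_smul, smul_dotProduct, smul_eq_mul, RCLike.star_def]

lemma PosSemidef.norm_dotProduct_mulVec_sq_le {B : Matrix n n 𝕜} (hB : B.PosSemidef)
    (x y : n → 𝕜) :
    ‖star x ⬝ᵥ (B *ᵥ y)‖ ^ 2 ≤
      RCLike.re (star x ⬝ᵥ (B *ᵥ x)) * RCLike.re (star y ⬝ᵥ (B *ᵥ y)) := by
  have h := @InnerProductSpace.Core.inner_mul_inner_self_le 𝕜 _ _ _ _ hB.preInnerProductCore x y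
  rw [sq]
  nth_rw 2 [← norm_star]
  rw [hB.isHermitian.star_dotProduct_mulVec x y]
  exact h

variable [DecidableEq n]

theorem inv_add_vecMulVec {K : Type*} [Field K] {A : Matrix n n K} (hA : IsUnit A)
    (u v : n → K) (h : 1 + v ⬝ᵥ (A⁻¹ *ᵥ u) ≠ 0) :
    (A + vecMulVec u v)⁻¹ =
      A⁻¹ - (1 + v ⬝ᵥ (A⁻¹ *ᵥ u))⁻¹ • vecMulVec (A⁻¹ *ᵥ u) (v ᵥ* A⁻¹) := by
  have hAA : A * A⁻¹ = 1 := mul_nonsing_inv A ((isUnit_iff_isUnit_det A).mp hA)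
  apply inv_eq_right_inv
  simp only [Matrix.add_mul, Matrix.mul_sub, Matrix.mul_smul, hAA, mul_vecMulVec, mulVec_mulVec,
    vecMulVec_mul, add_mulVec, one_mulVec, vecMulVec_mulVec, ← dotProduct_mulVec, op_smul_eq_smul,
    add_vecMulVec, smul_vecMulVec]
  linear_combination (norm := module) (-inv_mul_cancel₀ h) • vecMulVec u (v ᵥ* A⁻¹)

lemma PosDef.dotProduct_inv_add_smul_vecMulVec {A : Matrix n n 𝕜} (hA : A.PosDef)
    (a c : n → 𝕜) {s : ℝ} (hs : 0 ≤ s) :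
    star a ⬝ᵥ ((A + (s : 𝕜) • vecMulVec c (star c))⁻¹ *ᵥ a) =
      star a ⬝ᵥ (A⁻¹ *ᵥ a) - ((s * ‖star a ⬝ᵥ (A⁻¹ *ᵥ c)‖ ^ 2 /
        (1 + s * RCLike.re (star c ⬝ᵥ (A⁻¹ *ᵥ c))) : ℝ) : 𝕜) := by
  have hB := hA.inv
  set z := RCLike.re (star c ⬝ᵥ (A⁻¹ *ᵥ c))
  have hz : 0 ≤ z := (RCLike.nonneg_iff.mp (hB.posSemidef.dotProduct_mulVec_nonneg c)).1
  have hcc : star c ⬝ᵥ (A⁻¹ *ᵥ c) = (z : 𝕜) :=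
    (hB.isHermitian.ofReal_re_star_dotProduct_mulVec_self c).symm
  have hden : 1 + star c ⬝ᵥ (A⁻¹ *ᵥ ((s : 𝕜) • c)) = ((1 + s * z : ℝ) : 𝕜) := by
    rw [mulVec_smul, dotProduct_smul, smul_eq_mul, hcc]
    push_cast
    rfl
  have hden0 : ((1 + s * z : ℝ) : 𝕜) ≠ 0 := by
    exact_mod_cast (by positivity : (0 : ℝ) < 1 + s * z).ne'
  rw [← smul_vecMulVec, inv_add_vecMulVec hA.isUnit _ _ (hden ▸ hden0), hden]
  simp only [sub_mulVec, smul_mulVec, vecMulVec_mulVec, ← dotProduct_mulVec, op_smul_eq_smul,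
    dotProduct_sub, dotProduct_smul, smul_eq_mul, mulVec_smul]
  rw [← hB.isHermitian.star_dotProduct_mulVec a c, RCLike.star_def]
  push_cast
  linear_combination (-(s : 𝕜) / (1 + s * z)) * RCLike.conj_mul (star a ⬝ᵥ (A⁻¹ *ᵥ c))

lemma PosDef.antitoneOn_re_dotProduct_inv_add_smul_vecMulVec {A : Matrix n n 𝕜}
    (hA : A.PosDef) (a c : n → 𝕜) :
    AntitoneOn
      (fun s : ℝ => RCLike.re (star a ⬝ᵥ ((A + (s : 𝕜) • vecMulVec c (star c))⁻¹ *ᵥ a)))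
      (Ici 0) := by
  have hz := (RCLike.nonneg_iff.mp (hA.inv.posSemidef.dotProduct_mulVec_nonneg c)).1
  intro s₁ hs₁ s₂ hs₂ h
  simp only [hA.dotProduct_inv_add_smul_vecMulVec a c hs₁,
    hA.dotProduct_inv_add_smul_vecMulVec a c hs₂, map_sub, RCLike.ofReal_re]
  exact antitoneOn_sub_mul_div (sq_nonneg _) hz hs₁ hs₂ h

lemma PosDef.strictMonoOn_mul_re_dotProduct_inv_add_smul_vecMulVec {A : Matrix n n 𝕜}
    (hA : A.PosDef) {a : n → 𝕜} (ha : a ≠ 0) (c : n → 𝕜) :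
    StrictMonoOn
      (fun s : ℝ => s * RCLike.re (star a ⬝ᵥ ((A + (s : 𝕜) • vecMulVec c (star c))⁻¹ *ᵥ a)))
      (Ici 0) := by
  have hB := hA.inv
  have hx := (RCLike.pos_iff.mp (hB.dotProduct_mulVec_pos ha)).1
  have hz := (RCLike.nonneg_iff.mp (hB.posSemidef.dotProduct_mulVec_nonneg c)).1
  intro s₁ hs₁ s₂ hs₂ h
  simp only [hA.dotProduct_inv_add_smul_vecMulVec a c hs₁,
    hA.dotProduct_inv_add_smul_vecMulVec a c hs₂, map_sub, RCLike.ofReal_re]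
  exact strictMonoOn_mul_sub_mul_div hx hz (hB.posSemidef.norm_dotProduct_mulVec_sq_le a c)
    hs₁ hs₂ h

end Matrix

theorem stmt_18_general {T : ℕ} (a b c : Fin T → ℂ)
    (ha : ∑ i, ‖a i‖ ^ 2 = 1) (ρ : ℝ) (hρ : 0 < ρ) :
    AntitoneOn
      (fun θ : ℝ => ρ *
        (dotProduct (star a)
          ((1 + ((ρ : ℂ) • Matrix.vecMulVec b (star b)) +
              (((ρ * θ : ℝ) : ℂ) • Matrix.vecMulVec c (star c)))⁻¹ *ᵥ a)).re)
      (Set.Ici 0) ∧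
    StrictMonoOn
      (fun θ : ℝ => ρ * θ *
        (dotProduct (star a)
          ((1 + ((ρ : ℂ) • Matrix.vecMulVec b (star b)) +
              (((ρ * θ : ℝ) : ℂ) • Matrix.vecMulVec c (star c)))⁻¹ *ᵥ a)).re)
      (Set.Ici 0) := by
  have hA : (1 + (ρ : ℂ) • vecMulVec b (star b)).PosDef :=
    PosDef.one.add_posSemidef
      ((posSemidef_vecMulVec_self_star b).smul (Complex.zero_le_real.mpr hρ.le))
  have ha0 : a ≠ 0 := by
    rintro rfl
    simp at ha
  have hscale : StrictMonoOn (fun θ : ℝ => ρ * θ) (Ici 0) :=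
    fun _ _ _ _ h => mul_lt_mul_of_pos_left h hρ
  have hmaps : MapsTo (fun θ : ℝ => ρ * θ) (Ici 0) (Ici 0) :=
    fun _ hθ => mul_nonneg hρ.le hθ
  refine ⟨fun θ₁ hθ₁ θ₂ hθ₂ h => ?_,
    (hA.strictMonoOn_mul_re_dotProduct_inv_add_smul_vecMulVec ha0 c).comp hscale hmaps⟩
  exact mul_le_mul_of_nonneg_left
    (hA.antitoneOn_re_dotProduct_inv_add_smul_vecMulVec a c (hmaps hθ₁) (hmaps hθ₂)
      (hscale.monotoneOn hθ₁ hθ₂ h)) hρ.le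

theorem stmt_18 {T : ℕ} (a b c : Fin T → ℂ)
    (ha : ∑ i, ‖a i‖ ^ 2 = 1) (hb : ∑ i, ‖b i‖ ^ 2 = 1) (hc : ∑ i, ‖c i‖ ^ 2 = 1)
    (hab : a ≠ b) (hbc : b ≠ c) (hac : a ≠ c) (ρ : ℝ) (hρ : 0 < ρ) :
    AntitoneOn
      (fun θ : ℝ => ρ *
        (dotProduct (star a)
          ((1 + ((ρ : ℂ) • Matrix.vecMulVec b (star b)) +
              (((ρ * θ : ℝ) : ℂ) • Matrix.vecMulVec c (star c)))⁻¹ *ᵥ a)).re)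
      (Set.Ici 0) ∧
    StrictMonoOn
      (fun θ : ℝ => ρ * θ *
        (dotProduct (star a)
          ((1 + ((ρ : ℂ) • Matrix.vecMulVec b (star b)) +
              (((ρ * θ : ℝ) : ℂ) • Matrix.vecMulVec c (star c)))⁻¹ *ᵥ a)).re)
      (Set.Ici 0) :=
  stmt_18_general a b c ha ρ hρ
end
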